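/- arXiv:1008.2826 — 3 statements merged into one kernel-verified Lean document; each statement's English description precedes it below -/
import Mathlib

section
/- Let N₂ ≥ N₃ ≥ 1 be reals, let α, β be integers with α - β ≥ 8, and set n₁ = N₂ + αN₃ + N₃ñ₁, n₂ = N₂ + βN₃ + N₃ñ₂, n₃ = N₃(1 + ñ₃), n₄ = N₄(1 + ñ₄) with ñ₁, ñ₂, ñ₃, ñ₄ ∈ [0,1] and 1 ≤ N₄ ≤ N₃. Then n₁² - n₂² - n₃² - n₄² = (2N₂N₃(α - β) + (α² - β²)N₃²) · ψ(ñ₁,ñ₂,ñ₃,ñ₄) where ψ ≥ 1/2 on [0,1]^4. In particular n₁² - n₂² - n₃² - n₄² ≥ N₂N₃(α - β). -/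
set_option maxHeartbeats 1000000


theorem stmt_3 (N₂ N₃ N₄ : ℝ) (h23 : N₃ ≤ N₂) (h34 : N₄ ≤ N₃) (h4 : 1 ≤ N₄)
    (α β : ℤ) (hβ : 0 ≤ β) (hαβ : 8 ≤ α - β) :
    ∃ ψ : ℝ → ℝ → ℝ → ℝ → ℝ,
      ∀ t₁ ∈ Set.Icc (0:ℝ) 1, ∀ t₂ ∈ Set.Icc (0:ℝ) 1,
      ∀ t₃ ∈ Set.Icc (0:ℝ) 1, ∀ t₄ ∈ Set.Icc (0:ℝ) 1,
        ((N₂ + (α:ℝ) * N₃ + N₃ * t₁) ^ 2 - (N₂ + (β:ℝ) * N₃ + N₃ * t₂) ^ 2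
            - (N₃ * (1 + t₃)) ^ 2 - (N₄ * (1 + t₄)) ^ 2
          = (2 * N₂ * N₃ * ((α:ℝ) - (β:ℝ)) + ((α:ℝ) ^ 2 - (β:ℝ) ^ 2) * N₃ ^ 2)
              * ψ t₁ t₂ t₃ t₄) ∧
        (1 / 2 : ℝ) ≤ ψ t₁ t₂ t₃ t₄ ∧
        N₂ * N₃ * ((α:ℝ) - (β:ℝ))
          ≤ (N₂ + (α:ℝ) * N₃ + N₃ * t₁) ^ 2 - (N₂ + (β:ℝ) * N₃ + N₃ * t₂) ^ 2
            - (N₃ * (1 + t₃)) ^ 2 - (N₄ * (1 + t₄)) ^ 2 := by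
  have hN3 : (1:ℝ) ≤ N₃ := le_trans h4 h34
  have hN2 : (1:ℝ) ≤ N₂ := le_trans hN3 h23
  have hd : (8:ℝ) ≤ (α:ℝ) - (β:ℝ) := by exact_mod_cast hαβ
  have hb : (0:ℝ) ≤ (β:ℝ) := by exact_mod_cast hβ
  have hs : (8:ℝ) ≤ (α:ℝ) + (β:ℝ) := by linarith
  set D : ℝ := 2 * N₂ * N₃ * ((α:ℝ) - (β:ℝ)) + ((α:ℝ) ^ 2 - (β:ℝ) ^ 2) * N₃ ^ 2 with hD
  have hN3pos : (0:ℝ) < N₃ := by linarith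
  have hEpos : (0:ℝ) < 2 * N₂ + ((α:ℝ) + β) * N₃ := by nlinarith
  have hDeq : D = N₃ * (((α:ℝ) - β) * (2 * N₂ + ((α:ℝ) + β) * N₃)) := by rw [hD]; ring
  have hDpos : 0 < D := by
    rw [hDeq]
    exact mul_pos hN3pos (mul_pos (by linarith) hEpos)
  refine ⟨fun t₁ t₂ t₃ t₄ =>
    ((N₂ + (α:ℝ) * N₃ + N₃ * t₁) ^ 2 - (N₂ + (β:ℝ) * N₃ + N₃ * t₂) ^ 2
      - (N₃ * (1 + t₃)) ^ 2 - (N₄ * (1 + t₄)) ^ 2) / D, ?_⟩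
  intro t₁ ht₁ t₂ ht₂ t₃ ht₃ t₄ ht₄
  obtain ⟨h10, h11⟩ := ht₁
  obtain ⟨h20, h21⟩ := ht₂
  obtain ⟨h30, h31⟩ := ht₃
  obtain ⟨h40, h41⟩ := ht₄
  have hDne : D ≠ 0 := ne_of_gt hDpos
  have hN4pos : (0:ℝ) < N₄ := by linarith
  have key : D / 2 ≤ (N₂ + (α:ℝ) * N₃ + N₃ * t₁) ^ 2 - (N₂ + (β:ℝ) * N₃ + N₃ * t₂) ^ 2
      - (N₃ * (1 + t₃)) ^ 2 - (N₄ * (1 + t₄)) ^ 2 := by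
    have hsq4 : (N₄ * (1 + t₄)) ^ 2 ≤ N₃ ^ 2 * 4 := by
      have a1 : (0:ℝ) ≤ N₄ * (1 + t₄) := by positivity
      have a2 : N₄ * (1 + t₄) ≤ N₃ * 2 := by nlinarith
      calc (N₄ * (1 + t₄)) ^ 2 ≤ (N₃ * 2) ^ 2 := by
            exact pow_le_pow_left₀ a1 a2 2
        _ = N₃ ^ 2 * 4 := by ring
    have hsq3 : (N₃ * (1 + t₃)) ^ 2 ≤ N₃ ^ 2 * 4 := by
      have a1 : (0:ℝ) ≤ N₃ * (1 + t₃) := by positivity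
      have a2 : N₃ * (1 + t₃) ≤ N₃ * 2 := by nlinarith
      calc (N₃ * (1 + t₃)) ^ 2 ≤ (N₃ * 2) ^ 2 := by
            exact pow_le_pow_left₀ a1 a2 2
        _ = N₃ ^ 2 * 4 := by ring
    have hmain : N₃ * (((α:ℝ) - β - 1) * (2 * N₂ + ((α:ℝ) + β) * N₃)) ≤
        (N₂ + (α:ℝ) * N₃ + N₃ * t₁) ^ 2 - (N₂ + (β:ℝ) * N₃ + N₃ * t₂) ^ 2 := by
      have expand : (N₂ + (α:ℝ) * N₃ + N₃ * t₁) ^ 2 - (N₂ + (β:ℝ) * N₃ + N₃ * t₂) ^ 2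
          = N₃ * ((((α:ℝ) - β) + (t₁ - t₂)) * (2 * N₂ + ((α:ℝ) + β) * N₃ + N₃ * (t₁ + t₂))) := by
        ring
      rw [expand]
      have h1 : ((α:ℝ) - β - 1) ≤ ((α:ℝ) - β) + (t₁ - t₂) := by linarith
      have h2 : (2 * N₂ + ((α:ℝ) + β) * N₃) ≤ 2 * N₂ + ((α:ℝ) + β) * N₃ + N₃ * (t₁ + t₂) := by
        nlinarith
      have hp1 : (0:ℝ) ≤ ((α:ℝ) - β - 1) := by linarith
      have := mul_le_mul h1 h2 (le_of_lt hEpos) (by linarith)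
      have := mul_le_mul_of_nonneg_left this (le_of_lt hN3pos)
      linarith
    have hfin : D / 2 + 8 * N₃ ^ 2 ≤ N₃ * (((α:ℝ) - β - 1) * (2 * N₂ + ((α:ℝ) + β) * N₃)) := by
      rw [hDeq]
      have hE8 : 8 * N₃ ≤ 2 * N₂ + ((α:ℝ) + β) * N₃ := by
        nlinarith [mul_le_mul_of_nonneg_right hs hN3pos.le]
      have step : 8 * N₃ ≤ (((α:ℝ) - β) / 2 - 1) * (2 * N₂ + ((α:ℝ) + β) * N₃) := by
        have := le_mul_of_one_le_left hEpos.le (show (1:ℝ) ≤ ((α:ℝ) - β) / 2 - 1 by linarith)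
        linarith
      have hstep2 := mul_le_mul_of_nonneg_left step hN3pos.le
      nlinarith [hstep2]
    linarith
  have keyD : N₂ * N₃ * ((α:ℝ) - (β:ℝ)) ≤ D / 2 := by
    rw [hDeq]
    nlinarith [mul_nonneg (mul_nonneg (show (0:ℝ) ≤ (α:ℝ) - β by linarith)
      (show (0:ℝ) ≤ (α:ℝ) + β by linarith)) (sq_nonneg N₃)]
  refine ⟨?_, ?_, by linarith⟩
  · dsimp only
    rw [mul_comm D, div_mul_cancel₀ _ hDne]
  · rw [le_div_iff₀ hDpos]
    linarith
end

section
/- Let M be a closed Riemannian 2-manifold, 0 < s < 1, N ≥ 1, λ ≥ 1. Let U₀ ∈ H^s(M) and define u₀ on M_λ = λM by u₀(x) = (1/λ)U₀(x/λ). Then ‖∇ I u₀‖²_{L²(M_λ)} ≤ C (N^{2(1-s)}/λ^{2s}) ‖U₀‖²_{H^s(M)}, where I = m₀(√(-Δ_λ)/N) is the I-operator on M_λ. -/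
theorem stmt_13 (s : ℝ) (hs0 : 0 < s) (hs1 : s < 1)
    (m₀ : ℝ → ℝ)
    (hrange : ∀ t : ℝ, m₀ t ∈ Set.Ioc (0:ℝ) 1)
    (hmono : Antitone m₀)
    (h1 : ∀ t : ℝ, t ≤ 1 → m₀ t = 1)
    (h2 : ∀ t : ℝ, 2 ≤ t → m₀ t = t ^ (-(1 - s))) :
    ∃ C : ℝ, 0 < C ∧ ∀ N lam : ℝ, 1 ≤ N → 1 ≤ lam →
      ∀ ν a : ℕ → ℝ, (∀ k, 0 ≤ ν k) → (∀ k, 0 ≤ a k) →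
      Summable (fun k => (1 + ν k) ^ s * a k) →
      ∀ gradIuSq UHsSq : ℝ,
        gradIuSq = ∑' k, ν k / lam ^ 2 * m₀ (Real.sqrt (ν k) / (lam * N)) ^ 2 * a k →
        UHsSq = ∑' k, (1 + ν k) ^ s * a k →
        gradIuSq ≤ C * (N ^ (2 * (1 - s)) / lam ^ (2 * s)) * UHsSq := by
  -- key pointwise bound: t² m₀(t)² ≤ 4 t^(2s)
  have keyt : ∀ t : ℝ, 0 ≤ t → t ^ 2 * m₀ t ^ 2 ≤ 4 * t ^ (2 * s) := by
    intro t ht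
    rcases eq_or_lt_of_le ht with h0 | h0
    · rw [← h0, Real.zero_rpow (by positivity : 2 * s ≠ 0)]
      norm_num
    have htr : (t : ℝ) ^ 2 = t ^ (2 : ℝ) := by
      rw [← Real.rpow_natCast t 2]; norm_num
    rcases le_or_gt t 2 with h2t | h2t
    · have hm := hrange t
      have hm1 : m₀ t ^ 2 ≤ 1 := by nlinarith [hm.1, hm.2]
      have hstep : t ^ 2 * m₀ t ^ 2 ≤ t ^ 2 := by nlinarith [sq_nonneg t, hm.1]
      refine hstep.trans ?_
      have ht2 : t ^ (2 : ℝ) = t ^ (2 * s) * t ^ (2 - 2 * s) := by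
        rw [← Real.rpow_add h0]; ring_nf
      have hle : t ^ (2 - 2 * s) ≤ 4 := by
        calc t ^ (2 - 2 * s) ≤ (2 : ℝ) ^ (2 - 2 * s) :=
              Real.rpow_le_rpow ht h2t (by linarith)
          _ ≤ (2 : ℝ) ^ (2 : ℝ) :=
              Real.rpow_le_rpow_of_exponent_le one_le_two (by linarith)
          _ = 4 := by
              rw [show ((2:ℝ):ℝ) = ((2:ℕ):ℝ) by norm_num, Real.rpow_natCast]
              norm_num
      have htp : 0 ≤ t ^ (2 * s) := Real.rpow_nonneg ht _
      rw [htr, ht2]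
      nlinarith
    · rw [h2 t (le_of_lt h2t)]
      have hsq : (t ^ (-(1 - s))) ^ 2 = t ^ (-(1 - s) * 2) := by
        rw [← Real.rpow_natCast (t ^ (-(1 - s))) 2, ← Real.rpow_mul ht]
        norm_num
      rw [hsq, htr, ← Real.rpow_add h0]
      have heq : 2 + -(1 - s) * 2 = 2 * s := by ring
      rw [heq]
      nlinarith [Real.rpow_nonneg ht (2 * s)]
  refine ⟨4, by norm_num, ?_⟩
  intro N lam hN hlam ν a hν ha hsum gradIuSq UHsSq hgrad hU
  subst hgrad hU
  have hNpos : (0 : ℝ) < N := lt_of_lt_of_le one_pos hN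
  have hlpos : (0 : ℝ) < lam := lt_of_lt_of_le one_pos hlam
  have hlN : (0 : ℝ) < lam * N := by positivity
  have hl2s : (0 : ℝ) < lam ^ (2 * s) := Real.rpow_pos_of_pos hlpos _
  have hN2s : (0 : ℝ) < N ^ (2 * s) := Real.rpow_pos_of_pos hNpos _
  set c : ℝ := 4 * (N ^ (2 * (1 - s)) / lam ^ (2 * s)) with hc
  have key : ∀ k, ν k / lam ^ 2 * m₀ (Real.sqrt (ν k) / (lam * N)) ^ 2 * a k
      ≤ c * ((1 + ν k) ^ s * a k) := by
    intro k
    set t : ℝ := Real.sqrt (ν k) / (lam * N) with htdef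
    have ht : 0 ≤ t := by positivity
    have htsq : t ^ 2 = ν k / (lam * N) ^ 2 := by
      rw [htdef, div_pow, Real.sq_sqrt (hν k)]
    have hrel : ν k / lam ^ 2 = N ^ 2 * t ^ 2 := by
      rw [htsq]; field_simp
    have hts : t ^ (2 * s) = (ν k) ^ s / (lam ^ (2 * s) * N ^ (2 * s)) := by
      rw [htdef, Real.div_rpow (Real.sqrt_nonneg _) (le_of_lt hlN),
        Real.mul_rpow (le_of_lt hlpos) (le_of_lt hNpos),
        Real.sqrt_eq_rpow, ← Real.rpow_mul (hν k)]
      ring_nf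
    have hnus : (ν k) ^ s ≤ (1 + ν k) ^ s :=
      Real.rpow_le_rpow (hν k) (by linarith) (le_of_lt hs0)
    have hN22 : (N : ℝ) ^ (2 : ℕ) = N ^ (2 * (1 - s)) * N ^ (2 * s) := by
      rw [← Real.rpow_add hNpos]
      rw [show 2 * (1 - s) + 2 * s = ((2:ℕ):ℝ) by push_cast; ring,
        Real.rpow_natCast]
    have hmain : ν k / lam ^ 2 * m₀ t ^ 2 ≤ c * (1 + ν k) ^ s := by
      have h1' : ν k / lam ^ 2 * m₀ t ^ 2 = N ^ 2 * (t ^ 2 * m₀ t ^ 2) := by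
        rw [hrel]; ring
      have h2' : N ^ 2 * (t ^ 2 * m₀ t ^ 2) ≤ N ^ 2 * (4 * t ^ (2 * s)) := by
        have := keyt t ht
        nlinarith [sq_nonneg N]
      have h3' : N ^ 2 * (4 * t ^ (2 * s)) ≤ c * (1 + ν k) ^ s := by
        rw [hts, hc, hN22]
        have heq2 : N ^ (2 * (1 - s)) * N ^ (2 * s) *
            (4 * (ν k ^ s / (lam ^ (2 * s) * N ^ (2 * s))))
            = 4 * (N ^ (2 * (1 - s)) / lam ^ (2 * s)) * ν k ^ s := by
          field_simp
        rw [heq2]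
        exact mul_le_mul_of_nonneg_left hnus (by positivity)
      rw [h1']
      exact h2'.trans h3'
    calc ν k / lam ^ 2 * m₀ t ^ 2 * a k ≤ (c * (1 + ν k) ^ s) * a k :=
          mul_le_mul_of_nonneg_right hmain (ha k)
      _ = c * ((1 + ν k) ^ s * a k) := by ring
  have hcpos : 0 ≤ c := by positivity
  have hsum2 : Summable (fun k => c * ((1 + ν k) ^ s * a k)) := hsum.mul_left c
  have hnn : ∀ k, 0 ≤ ν k / lam ^ 2 * m₀ (Real.sqrt (ν k) / (lam * N)) ^ 2 * a k := by
    intro k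
    exact mul_nonneg (mul_nonneg (div_nonneg (hν k) (sq_nonneg lam)) (sq_nonneg _)) (ha k)
  have hsumL : Summable (fun k => ν k / lam ^ 2 * m₀ (Real.sqrt (ν k) / (lam * N)) ^ 2 * a k) :=
    Summable.of_nonneg_of_le hnn key hsum2
  calc (∑' k, ν k / lam ^ 2 * m₀ (Real.sqrt (ν k) / (lam * N)) ^ 2 * a k)
      ≤ ∑' k, c * ((1 + ν k) ^ s * a k) := Summable.tsum_le_tsum key hsumL hsum2
    _ = c * ∑' k, (1 + ν k) ^ s * a k := tsum_mul_left
end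

section
/- Let M be a compact d-manifold (possibly with boundary), and suppose the trilinear correlation bound |∫_M e₁e₂e₃e₄ dx| ≤ C_p μ₁^{-p} holds for all p whenever e_i are L²-normalized eigenfunctions with eigenvalues μ_i² and C μ_j ≤ μ₁ for j=2,3,4. Then for functions φᵢ on M_λ = λM spectrally localized at dyadic scales N₁ ≥ C N₂ ≥ N₃ ≥ N₄ and any bounded multiplier weight with |w(n₁,...,n₄)| ≤ n₁², the sum |Σ_{nᵢ∼Nᵢ} w(n₁,…,n₄) ∫₀^t ∫_{M_λ} π_{n₁}φ₁ π_{n₂}φ₂ π_{n₃}φ₃ π_{n₄}φ₄ dx dt| ≤ C_q N₁^{-q} ∏ᵢ ‖φᵢ‖_{X^{0,1/2+}} for every q > 0, where the implicit constant uses Weyl's law #{eigenvalues ν with N ≤ √ν ≤ 2N} ≲ N^d. -/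
open MeasureTheory

/-!
Every term of the sum is a product of four eigenfunction clusters whose top
frequency `λ n₁ ≳ λ N₁` dominates the others, so the correlation bound makes its space integral
`O((λ N₁)^{-P})` uniformly in time, for every `P`. The weight costs at most `(λ N₁)²` and, by
Weyl's law, there are at most `(λ N₁)^{4d}` terms; taking `P ≥ q + 4d + 2` absorbs both losses.
-/

lemma norm_setIntegral_Ioc_le_of_norm_le {E : Type*} [NormedAddCommGroup E] [NormedSpace ℝ E]
    {f : ℝ → E} {a b B : ℝ} (hab : a ≤ b) (hf : ∀ τ, ‖f τ‖ ≤ B) :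
    ‖∫ τ in Set.Ioc a b, f τ‖ ≤ B * (b - a) := by
  rw [← intervalIntegral.integral_of_le hab, ← abs_of_nonneg (sub_nonneg.mpr hab)]
  exact intervalIntegral.norm_integral_le_of_norm_le_const fun τ _ => hf τ

lemma norm_ofReal_mul_setIntegral_Ioc_le {f : ℝ → ℂ} {w a B t : ℝ} (hw : |w| ≤ a)
    (hf : ∀ τ, ‖f τ‖ ≤ B) (hB : 0 ≤ B) (ht : 0 ≤ t) (ht1 : t ≤ 1) :
    ‖(w : ℂ) * ∫ τ in Set.Ioc 0 t, f τ‖ ≤ a * B := by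
  rw [norm_mul, Complex.norm_real, Real.norm_eq_abs]
  have hint : ‖∫ τ in Set.Ioc 0 t, f τ‖ ≤ B :=
    (norm_setIntegral_Ioc_le_of_norm_le ht hf).trans
      (by rw [sub_zero]; exact mul_le_of_le_one_right hB ht1)
  exact mul_le_mul hw hint (norm_nonneg _) ((abs_nonneg w).trans hw)

lemma card_piFinset_le_pow {ι α : Type*} [DecidableEq ι] [Fintype ι] {S : ι → Finset α} {B : ℝ}
    (hS : ∀ i, ((S i).card : ℝ) ≤ B) :
    ((Fintype.piFinset S).card : ℝ) ≤ B ^ Fintype.card ι := by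
  rw [Fintype.card_piFinset, Nat.cast_prod]
  calc ∏ i, ((S i).card : ℝ) ≤ ∏ _i : ι, B :=
        Finset.prod_le_prod (fun _ _ => Nat.cast_nonneg _) fun i _ => hS i
    _ = B ^ Fintype.card ι := by rw [Finset.prod_const, Finset.card_univ]

lemma mul_rpow_neg_mul_prod_le {ι : Type*} [Fintype ι] {c a b P : ℝ} {e Y : ι → ℝ} (hc : 0 ≤ c)
    (ha : 0 < a) (hab : a ≤ b) (hP : 0 ≤ P) (he : ∀ i, 0 ≤ e i) (heY : ∀ i, e i ≤ Y i) :
    c * b ^ (-P) * ∏ i, e i ≤ c * a ^ (-P) * ∏ i, Y i := by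
  have hba : b ^ (-P) ≤ a ^ (-P) := Real.rpow_le_rpow_of_nonpos ha hab (neg_nonpos.mpr hP)
  exact mul_le_mul (mul_le_mul_of_nonneg_left hba hc)
    (Finset.prod_le_prod (fun i _ => he i) fun i _ => heY i) (Finset.prod_nonneg fun i _ => he i)
    (mul_nonneg hc (Real.rpow_nonneg ha.le _))

section Dyadic

variable {ι : Type*} [Fintype ι] [DecidableEq ι] {i₀ : ι} {C lam : ℝ} {N : ι → ℝ}
  {S : ι → Finset ℝ}

lemma separated_of_mem_piFinset (hC : 0 ≤ C) (hlam : 0 ≤ lam)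
    (hS : ∀ i, ∀ n ∈ S i, N i ≤ n ∧ n < 2 * N i) (hsep : ∀ j, j ≠ i₀ → 2 * C * N j ≤ N i₀)
    {n : ι → ℝ} (hn : n ∈ Fintype.piFinset S) (j : ι) (hj : j ≠ i₀) :
    C * (lam * n j) ≤ lam * n i₀ := by
  have hmem := Fintype.mem_piFinset.mp hn
  have : C * n j ≤ n i₀ := by nlinarith [hS j (n j) (hmem j), hS i₀ (n i₀) (hmem i₀), hsep j hj]
  calc C * (lam * n j) = lam * (C * n j) := by ring
    _ ≤ lam * n i₀ := mul_le_mul_of_nonneg_left this hlam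

lemma card_piFinset_le_of_weyl {Cw : ℝ} {d : ℕ} (hC : 1 ≤ 2 * C) (hlam : 0 ≤ lam)
    (hN : ∀ i, 0 ≤ N i) (hCw : 0 ≤ Cw) (hWeyl : ∀ i, ((S i).card : ℝ) ≤ Cw * (lam * N i) ^ d)
    (hsep : ∀ j, j ≠ i₀ → 2 * C * N j ≤ N i₀) :
    ((Fintype.piFinset S).card : ℝ) ≤ (Cw * (lam * N i₀) ^ d) ^ Fintype.card ι := by
  refine card_piFinset_le_pow fun i => (hWeyl i).trans ?_
  have hNi : N i ≤ N i₀ := by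
    rcases eq_or_ne i i₀ with rfl | hi
    · rfl
    · nlinarith [hsep i hi, hN i]
  gcongr
  exact mul_nonneg hlam (hN i)

end Dyadic

lemma pow_mul_rpow_neg_le_rpow_neg {N X q P : ℝ} {k : ℕ} (hN : 1 ≤ N) (hNX : N ≤ X)
    (hq : 0 ≤ q) (hP : q + k ≤ P) : X ^ k * X ^ (-P) ≤ N ^ (-q) := by
  have hX : 1 ≤ X := hN.trans hNX
  calc X ^ k * X ^ (-P) = X ^ (-P + k) := by
        rw [Real.rpow_add_natCast (by positivity), mul_comm]
    _ ≤ X ^ (-q) := Real.rpow_le_rpow_of_exponent_le hX (by linarith)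
    _ ≤ N ^ (-q) := Real.rpow_le_rpow_of_nonpos (by positivity) hNX (by linarith)

theorem stmt_19_general {Mlam : Type*} [MeasurableSpace Mlam] (ν : Measure Mlam)
    (d : ℕ)
    (Ccorr : ℕ → ℝ) (hCcorr : ∀ p, 0 ≤ Ccorr p)
    (Ccond Cw : ℝ) (hCcond : 1 ≤ Ccond) (hCw : 0 ≤ Cw) :
    ∀ q : ℝ, 0 < q → ∃ Cq : ℝ,
      ∀ lam : ℝ, 1 ≤ lam →
      ∀ (N : Fin 4 → ℝ) (S : Fin 4 → Finset ℝ),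
      (∀ i, 1 ≤ N i) →
      (∀ i, ∀ n ∈ S i, N i ≤ n ∧ n < 2 * N i) →
      -- Weyl law eigenvalue count on the rescaled manifold
      (∀ i, ((S i).card : ℝ) ≤ Cw * (lam * N i) ^ d) →
      -- frequency separation `N₁ ≥ C N₂ ≥ N₃ ≥ N₄`
      (∀ j : Fin 4, j ≠ 0 → 2 * Ccond * N j ≤ N 0) →
      ∀ (φ : Fin 4 → ℝ → Mlam → ℂ) (p : Fin 4 → ℝ → ℝ → Mlam → ℂ)
        (w : (Fin 4 → ℝ) → ℝ) (Xn : Fin 4 → ℝ) (t : ℝ),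
      0 < t → t ≤ 1 →
      (∀ i τ x, φ i τ x = ∑ n ∈ S i, p i n τ x) →
      (∀ n : Fin 4 → ℝ, |w n| ≤ (n 0) ^ 2) →
      -- rapid-decay correlation bound for products of eigenfunction clusters
      (∀ (P : ℕ) (τ : ℝ) (n : Fin 4 → ℝ), (∀ i, n i ∈ S i) →
        (∀ j : Fin 4, j ≠ 0 → Ccond * (lam * n j) ≤ lam * n 0) →
        ‖∫ x, ∏ i, p i (n i) τ x ∂ν‖
          ≤ Ccorr P * (lam * n 0) ^ (-(P : ℝ)) *
              ∏ i, (eLpNorm (p i (n i) τ) 2 ν).toReal) →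
      -- `X^{0,1/2+} ⊂ L^∞_t L²_x` embedding together with the projection bound
      (∀ (i : Fin 4) (n τ : ℝ), (eLpNorm (p i n τ) 2 ν).toReal ≤ Xn i) →
      (∀ i, 0 ≤ Xn i) →
      ‖∑ n ∈ Fintype.piFinset S, (w n : ℂ) *
          ∫ τ in Set.Ioc (0:ℝ) t, ∫ x, ∏ i, p i (n i) τ x ∂ν‖
        ≤ Cq * N 0 ^ (-q) * ∏ i, Xn i := by
  intro q hq
  set P : ℕ := ⌈q⌉₊ + (4 * d + 2)
  refine ⟨4 * Ccorr P * Cw ^ 4, ?_⟩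
  intro lam hlam N S hN hS hWeyl hsep φ p w Xn t ht ht1 hφ hw hcorr hXnb hXn0
  set X := lam * N 0
  have hN₀X : N 0 ≤ X := le_mul_of_one_le_left (by linarith [hN 0]) hlam
  have hX : 0 < X := by linarith [hN 0]
  set B := Ccorr P * X ^ (-(P : ℝ)) * ∏ i, Xn i
  have hB : 0 ≤ B := mul_nonneg (mul_nonneg (hCcorr P) (Real.rpow_nonneg hX.le _))
    (Finset.prod_nonneg fun i _ => hXn0 i)
  have hterm : ∀ n ∈ Fintype.piFinset S,
      ‖(w n : ℂ) * ∫ τ in Set.Ioc (0:ℝ) t, ∫ x, ∏ i, p i (n i) τ x ∂ν‖ ≤ 4 * X ^ 2 * B := by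
    intro n hn
    have hmem := Fintype.mem_piFinset.mp hn
    have hn₀ := hS 0 (n 0) (hmem 0)
    refine norm_ofReal_mul_setIntegral_Ioc_le ((hw n).trans (by nlinarith [hN 0]))
      (fun τ => ?_) hB ht.le ht1
    have hsep' := separated_of_mem_piFinset (lam := lam) (by linarith) (by linarith) hS hsep hn
    exact (hcorr P τ n hmem hsep').trans
      (mul_rpow_neg_mul_prod_le (hCcorr P) hX (mul_le_mul_of_nonneg_left hn₀.1 (by linarith))
        (Nat.cast_nonneg P) (fun _ => ENNReal.toReal_nonneg) fun _ => hXnb _ _ _)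
  have hcard : ((Fintype.piFinset S).card : ℝ) ≤ (Cw * X ^ d) ^ 4 :=
    card_piFinset_le_of_weyl (by linarith) (by linarith) (fun i => by linarith [hN i]) hCw hWeyl
      hsep
  have hdecay : X ^ (4 * d + 2) * X ^ (-(P : ℝ)) ≤ N 0 ^ (-q) :=
    pow_mul_rpow_neg_le_rpow_neg (hN 0) hN₀X hq.le (by push_cast [P]; linarith [Nat.le_ceil q])
  calc _ ≤ ((Fintype.piFinset S).card : ℝ) * (4 * X ^ 2 * B) := by
        simpa using norm_sum_le_of_le _ hterm
    _ ≤ (Cw * X ^ d) ^ 4 * (4 * X ^ 2 * B) := by gcongr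
    _ = 4 * Ccorr P * Cw ^ 4 * (X ^ (4 * d + 2) * X ^ (-(P : ℝ))) * ∏ i, Xn i := by ring
    _ ≤ 4 * Ccorr P * Cw ^ 4 * N 0 ^ (-q) * ∏ i, Xn i := by
        have := hCcorr P
        gcongr
        exact Finset.prod_nonneg fun i _ => hXn0 i

theorem stmt_19 {Mlam : Type*} [MeasurableSpace Mlam] (ν : Measure Mlam)
    (d : ℕ) (hd : 0 < d)
    (Ccorr : ℕ → ℝ) (hCcorr : ∀ p, 0 ≤ Ccorr p)
    (Ccond Cw : ℝ) (hCcond : 1 ≤ Ccond) (hCw : 0 ≤ Cw) :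
    ∀ q : ℝ, 0 < q → ∃ Cq : ℝ,
      ∀ lam : ℝ, 1 ≤ lam →
      ∀ (N : Fin 4 → ℝ) (S : Fin 4 → Finset ℝ),
      (∀ i, 1 ≤ N i) →
      (∀ i, ∀ n ∈ S i, N i ≤ n ∧ n < 2 * N i) →
      -- Weyl law eigenvalue count on the rescaled manifold
      (∀ i, ((S i).card : ℝ) ≤ Cw * (lam * N i) ^ d) →
      -- frequency separation `N₁ ≥ C N₂ ≥ N₃ ≥ N₄`
      (∀ j : Fin 4, j ≠ 0 → 2 * Ccond * N j ≤ N 0) →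
      ∀ (φ : Fin 4 → ℝ → Mlam → ℂ) (p : Fin 4 → ℝ → ℝ → Mlam → ℂ)
        (w : (Fin 4 → ℝ) → ℝ) (Xn : Fin 4 → ℝ) (t : ℝ),
      0 < t → t ≤ 1 →
      (∀ i τ x, φ i τ x = ∑ n ∈ S i, p i n τ x) →
      (∀ n : Fin 4 → ℝ, |w n| ≤ (n 0) ^ 2) →
      -- rapid-decay correlation bound for products of eigenfunction clusters
      (∀ (P : ℕ) (τ : ℝ) (n : Fin 4 → ℝ), (∀ i, n i ∈ S i) →
        (∀ j : Fin 4, j ≠ 0 → Ccond * (lam * n j) ≤ lam * n 0) →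
        ‖∫ x, ∏ i, p i (n i) τ x ∂ν‖
          ≤ Ccorr P * (lam * n 0) ^ (-(P : ℝ)) *
              ∏ i, (eLpNorm (p i (n i) τ) 2 ν).toReal) →
      -- `X^{0,1/2+} ⊂ L^∞_t L²_x` embedding together with the projection bound
      (∀ (i : Fin 4) (n τ : ℝ), (eLpNorm (p i n τ) 2 ν).toReal ≤ Xn i) →
      (∀ i, 0 ≤ Xn i) →
      ‖∑ n ∈ Fintype.piFinset S, (w n : ℂ) *
          ∫ τ in Set.Ioc (0:ℝ) t, ∫ x, ∏ i, p i (n i) τ x ∂ν‖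
        ≤ Cq * N 0 ^ (-q) * ∏ i, Xn i :=
  stmt_19_general ν d Ccorr hCcorr Ccond Cw hCcond hCw
end
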